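/- Let f₁, f₂ : ℝ^N → ℝ be bounded, continuous and nonnegative, and let u₁, u₂ be the corresponding BC-solutions of the nonlocal Stefan problem. If f₁ ≤ f₂ on ℝ^N, then u₁(x,t) ≤ u₂(x,t) for all x ∈ ℝ^N and t ≥ 0. -/

import Mathlib

open MeasureTheory Filter
open scoped Topology Pointwise

noncomputable section

abbrev Spc (N : ℕ) := EuclideanSpace ℝ (Fin N)

variable {N : ℕ}

/-- Convolution in the space variable: `(J ∗ v)(x) = ∫ J(x−y) v(y) dy`. -/
def convol (J v : Spc N → ℝ) : Spc N → ℝ := fun x => ∫ y, J (x - y) * v y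

/-- The temperature associated to an enthalpy `g`: `(g − 1)₊`. -/
def tempr (g : Spc N → ℝ) : Spc N → ℝ := fun x => max (g x - 1) 0

/-- Hypotheses on the kernel `J`: continuous, nonnegative, radially symmetric,
supported in the closed ball of radius `RJ > 0`, with unit mass. -/
structure IsKernel (J : Spc N → ℝ) (RJ : ℝ) : Prop where
  cont : Continuous J
  nonneg : ∀ x, 0 ≤ J x
  radial : ∀ x y : Spc N, ‖x‖ = ‖y‖ → J x = J y
  supp_subset : ∀ x : Spc N, RJ < ‖x‖ → J x = 0
  radius_pos : 0 < RJ
  mass : ∫ x, J x = 1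

/-- `u` is an L¹-solution of the nonlocal Stefan problem with initial datum `f`:
a continuous curve in L¹ such that `u(t) = f + ∫₀ᵗ (J∗v(s) − v(s)) ds` with `v = (u−1)₊`. -/
structure IsL1Solution (J f : Spc N → ℝ) (u : ℝ → Spc N → ℝ) : Prop where
  integrable : ∀ t, 0 ≤ t → Integrable (u t)
  contL1 : ∀ t, 0 ≤ t →
    Tendsto (fun s => ∫ x, |u s x - u t x|) (𝓝[Set.Ici (0:ℝ)] t) (𝓝 0)
  eqn : ∀ t, 0 ≤ t → ∀ᵐ x ∂(volume : Measure (Spc N)), u t x =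
    f x + ∫ s in (0:ℝ)..t, (convol J (tempr (u s)) x - tempr (u s) x)

/-- `u` is a BC-solution of the nonlocal Stefan problem with (bounded continuous) initial
datum `f`: continuous and bounded on `ℝ^N × [0,T]` for every `T > 0`, and satisfying the
integral equation pointwise, with `v = (u − 1)₊`, the convolution in the space variable. -/
structure IsBCSolution (J f : Spc N → ℝ) (u : Spc N → ℝ → ℝ) : Prop where
  cont : ContinuousOn (fun p : Spc N × ℝ => u p.1 p.2) {p : Spc N × ℝ | 0 ≤ p.2}
  bdd : ∀ T, 0 < T → ∃ C, ∀ x : Spc N, ∀ t ∈ Set.Icc (0:ℝ) T, |u x t| ≤ C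
  eqn : ∀ x : Spc N, ∀ t, 0 ≤ t → u x t =
    f x + ∫ s in (0:ℝ)..t,
      ((∫ y, J (x - y) * max (u y s - 1) 0) - max (u x s - 1) 0)

/-! Let `w = u₁ − u₂`, which is `≤ 0` at time `0`. If `w(x, t) > 0`, let `r` be the last time
before `t` with `w(x, r) = 0`. On `(r, t]` we have `u₁(x, ·) > u₂(x, ·)`, so the local term
`−(u − 1)₊` of the equation favours `u₂`, and since `J ≥ 0` has unit mass,
`w(x, t) ≤ ∫ᵣᵗ sup_y w(y, s)₊ ds`. Starting from a bound `C` on `[0, T]`, this bootstraps to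
`w ≤ C tⁿ / n!` for every `n`, hence `w ≤ 0`. -/

open Set Nat

lemma max_sub_one_sub_max_sub_one_le (a b : ℝ) :
    max (a - 1) 0 - max (b - 1) 0 ≤ max (a - b) 0 := by
  simpa using max_sub_max_le_max (a - 1) 0 (b - 1) 0

lemma abs_max_sub_one_zero_le (a : ℝ) : |max (a - 1) 0| ≤ |a| := by
  rw [abs_of_nonneg (le_max_right _ _)]
  exact max_le (by linarith [le_abs_self a]) (abs_nonneg a)

lemma integral_mul_pow_div_factorial (C a b : ℝ) (n : ℕ) :
    ∫ s in a..b, C * (s ^ n / n !) =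
      C * (b ^ (n + 1) / (n + 1)!) - C * (a ^ (n + 1) / (n + 1)!) := by
  simp only [intervalIntegral.integral_const_mul, intervalIntegral.integral_div, integral_pow,
    factorial_succ]
  push_cast
  field_simp

lemma exists_eq_zero_forall_pos_Ioc {w : ℝ → ℝ} {a t : ℝ} (hat : a ≤ t)
    (hw : ContinuousOn w (Icc a t)) (ha : w a ≤ 0) (ht : 0 < w t) :
    ∃ r ∈ Ico a t, w r = 0 ∧ ∀ s ∈ Ioc r t, 0 < w s := by
  set S := Icc a t ∩ w ⁻¹' Iic 0
  have hS : IsClosed S := hw.preimage_isClosed_of_isClosed isClosed_Icc isClosed_Iic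
  have hSbdd : BddAbove S := ⟨t, fun s hs => hs.1.2⟩
  have hrS : sSup S ∈ S := hS.csSup_mem ⟨a, ⟨le_rfl, hat⟩, ha⟩ hSbdd
  have hpos : ∀ s ∈ Ioc (sSup S) t, 0 < w s := fun s hs => not_le.1 fun h =>
    (le_csSup hSbdd ⟨⟨hrS.1.1.trans hs.1.le, hs.2⟩, h⟩).not_gt hs.1
  have hrt : sSup S < t := hrS.1.2.lt_of_ne fun h => (h ▸ hrS.2 : w t ≤ 0).not_gt ht
  obtain ⟨s, hs, hs0⟩ := intermediate_value_Icc hrt.le (hw.mono (Icc_subset_Icc_left hrS.1.1))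
    ⟨hrS.2, ht.le⟩
  obtain rfl | hrs := hs.1.eq_or_lt
  · exact ⟨_, ⟨hrS.1.1, hrt⟩, hs0, hpos⟩
  · exact absurd hs0 (hpos s ⟨hrs, hs.2⟩).ne'

namespace IsKernel

variable {J : Spc N → ℝ} {RJ : ℝ}

lemma hasCompactSupport (hJ : IsKernel J RJ) : HasCompactSupport J :=
  HasCompactSupport.intro (isCompact_closedBall 0 RJ) fun x hx =>
    hJ.supp_subset x (by simpa using hx)

lemma integrable (hJ : IsKernel J RJ) : Integrable J :=
  hJ.cont.integrable_of_hasCompactSupport hJ.hasCompactSupport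

lemma integral_comp_sub_left (hJ : IsKernel J RJ) (x : Spc N) : ∫ y, J (x - y) = 1 := by
  rw [integral_sub_left_eq_self J volume x, hJ.mass]

end IsKernel

/-- The right-hand side `J ∗ v − v`, `v = (u − 1)₊`, of the nonlocal Stefan problem. -/
def stefanRhs (J : Spc N → ℝ) (u : Spc N → ℝ → ℝ) (x : Spc N) (s : ℝ) : ℝ :=
  (∫ y, J (x - y) * max (u y s - 1) 0) - max (u x s - 1) 0

namespace IsBCSolution

variable {J f : Spc N → ℝ} {RJ : ℝ} {u : Spc N → ℝ → ℝ}

lemma exists_bound (hu : IsBCSolution J f u) (T : ℝ) :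
    ∃ C, ∀ x, ∀ s ∈ Icc 0 T, |u x s| ≤ C := by
  obtain ⟨C, hC⟩ := hu.bdd (max T 1) (by positivity)
  exact ⟨C, fun x s hs => hC x s ⟨hs.1, hs.2.trans (le_max_left _ _)⟩⟩

lemma continuous_space (hu : IsBCSolution J f u) {s : ℝ} (hs : 0 ≤ s) :
    Continuous fun y => u y s :=
  hu.cont.comp_continuous (continuous_id.prodMk continuous_const) fun _ => hs

lemma continuousOn_time (hu : IsBCSolution J f u) (x : Spc N) : ContinuousOn (u x) (Ici 0) :=
  hu.cont.comp (continuous_const.prodMk continuous_id).continuousOn fun _ hs => hs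

lemma apply_zero (hu : IsBCSolution J f u) (x : Spc N) : u x 0 = f x := by
  simpa using hu.eqn x 0 le_rfl

lemma integrable_kernel_mul (hJ : IsKernel J RJ) (hu : IsBCSolution J f u) (x : Spc N)
    {s : ℝ} (hs : 0 ≤ s) : Integrable fun y => J (x - y) * max (u y s - 1) 0 := by
  obtain ⟨C, hC⟩ := hu.exists_bound s
  refine (hJ.integrable.comp_sub_left x).mul_bdd (c := C)
    (((hu.continuous_space hs).sub continuous_const).max continuous_const).aestronglyMeasurable
    (.of_forall fun y => ?_)
  exact (abs_max_sub_one_zero_le _).trans (hC y s ⟨hs, le_rfl⟩)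

lemma continuousOn_stefanRhs (hJ : IsKernel J RJ) (hu : IsBCSolution J f u) (x : Spc N)
    (T : ℝ) : ContinuousOn (stefanRhs J u x) (Icc 0 T) := by
  obtain ⟨C, hC⟩ := hu.exists_bound T
  have htemp : ∀ y, ContinuousOn (fun s => max (u y s - 1) 0) (Icc 0 T) := fun y =>
    (continuous_id.max continuous_const).comp_continuousOn
      (((hu.continuousOn_time y).mono Icc_subset_Ici_self).sub continuousOn_const)
  refine ContinuousOn.sub ?_ (htemp x)
  refine continuousOn_of_dominated (bound := fun y => J (x - y) * C)
    (fun s hs => (hu.integrable_kernel_mul hJ x hs.1).aestronglyMeasurable)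
    (fun s hs => .of_forall fun y => ?_) ((hJ.integrable.comp_sub_left x).mul_const C)
    (.of_forall fun y => continuousOn_const.mul (htemp y))
  rw [norm_mul, Real.norm_of_nonneg (hJ.nonneg _)]
  exact mul_le_mul_of_nonneg_left ((abs_max_sub_one_zero_le _).trans (hC y s hs)) (hJ.nonneg _)

lemma intervalIntegrable_stefanRhs (hJ : IsKernel J RJ) (hu : IsBCSolution J f u)
    (x : Spc N) {a b : ℝ} (ha : 0 ≤ a) (hb : 0 ≤ b) :
    IntervalIntegrable (stefanRhs J u x) volume a b :=
  ((hu.continuousOn_stefanRhs hJ x (max a b)).mono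
    (uIcc_subset_Icc ⟨ha, le_max_left a b⟩ ⟨hb, le_max_right a b⟩)).intervalIntegrable

lemma sub_eq_integral_stefanRhs (hJ : IsKernel J RJ) (hu : IsBCSolution J f u) (x : Spc N)
    {r t : ℝ} (hr : 0 ≤ r) (ht : 0 ≤ t) :
    u x t - u x r = ∫ s in r..t, stefanRhs J u x s := by
  rw [hu.eqn x t ht, hu.eqn x r hr, add_sub_add_left_eq_sub]
  exact intervalIntegral.integral_interval_sub_left
    (hu.intervalIntegrable_stefanRhs hJ x le_rfl ht) (hu.intervalIntegrable_stefanRhs hJ x le_rfl hr)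

end IsBCSolution

section Comparison

variable {J f₁ f₂ : Spc N → ℝ} {RJ : ℝ} {u₁ u₂ : Spc N → ℝ → ℝ}

lemma stefanRhs_sub_le (hJ : IsKernel J RJ) (hu₁ : IsBCSolution J f₁ u₁)
    (hu₂ : IsBCSolution J f₂ u₂) {x : Spc N} {s M : ℝ} (hs : 0 ≤ s) (hx : u₂ x s ≤ u₁ x s)
    (hM : ∀ y, u₁ y s - u₂ y s ≤ M) (hM0 : 0 ≤ M) :
    stefanRhs J u₁ x s - stefanRhs J u₂ x s ≤ M := by
  have hconv : (∫ y, J (x - y) * max (u₁ y s - 1) 0) - ∫ y, J (x - y) * max (u₂ y s - 1) 0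
      ≤ M := by
    rw [← integral_sub (hu₁.integrable_kernel_mul hJ x hs) (hu₂.integrable_kernel_mul hJ x hs)]
    calc (∫ y, J (x - y) * max (u₁ y s - 1) 0 - J (x - y) * max (u₂ y s - 1) 0)
        ≤ ∫ y, J (x - y) * M := by
          refine integral_mono ((hu₁.integrable_kernel_mul hJ x hs).sub
            (hu₂.integrable_kernel_mul hJ x hs))
            ((hJ.integrable.comp_sub_left x).mul_const M) fun y => ?_
          rw [← mul_sub]
          exact mul_le_mul_of_nonneg_left
            ((max_sub_one_sub_max_sub_one_le _ _).trans (max_le (hM y) hM0)) (hJ.nonneg _)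
      _ = M := by rw [integral_mul_const, hJ.integral_comp_sub_left, one_mul]
  have hlocal : max (u₂ x s - 1) 0 ≤ max (u₁ x s - 1) 0 := by gcongr
  unfold stefanRhs
  linarith

theorem sub_le_mul_pow_div_factorial (hJ : IsKernel J RJ) (hu₁ : IsBCSolution J f₁ u₁)
    (hu₂ : IsBCSolution J f₂ u₂) (hf : ∀ x, f₁ x ≤ f₂ x) {T C : ℝ}
    (hC : ∀ x, ∀ t ∈ Icc 0 T, u₁ x t - u₂ x t ≤ C) (hC0 : 0 ≤ C) (n : ℕ) :
    ∀ x, ∀ t ∈ Icc 0 T, u₁ x t - u₂ x t ≤ C * (t ^ n / n !) := by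
  induction n with
  | zero => simpa using hC
  | succ n ih =>
    intro x t ⟨ht0, htT⟩
    by_cases hwt : u₁ x t - u₂ x t ≤ 0
    · exact hwt.trans (by positivity)
    have hw : ContinuousOn (fun s => u₁ x s - u₂ x s) (Icc 0 t) :=
      ((hu₁.continuousOn_time x).sub (hu₂.continuousOn_time x)).mono Icc_subset_Ici_self
    have hw0 : u₁ x 0 - u₂ x 0 ≤ 0 := by
      rw [hu₁.apply_zero, hu₂.apply_zero]; linarith [hf x]
    obtain ⟨r, ⟨hr0, hrt⟩, hwr, hpos⟩ :=
      exists_eq_zero_forall_pos_Ioc ht0 hw hw0 (not_le.1 hwt)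
    have hnonneg : ∀ s ∈ Icc r t, u₂ x s ≤ u₁ x s := fun s hs => by
      obtain rfl | hrs := hs.1.eq_or_lt
      · linarith
      · linarith [hpos s ⟨hrs, hs.2⟩]
    have hI₁ := hu₁.intervalIntegrable_stefanRhs hJ x hr0 ht0
    have hI₂ := hu₂.intervalIntegrable_stefanRhs hJ x hr0 ht0
    calc u₁ x t - u₂ x t = (u₁ x t - u₁ x r) - (u₂ x t - u₂ x r) := by linarith
      _ = ∫ s in r..t, (stefanRhs J u₁ x s - stefanRhs J u₂ x s) := by
        rw [hu₁.sub_eq_integral_stefanRhs hJ x hr0 ht0,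
          hu₂.sub_eq_integral_stefanRhs hJ x hr0 ht0, intervalIntegral.integral_sub hI₁ hI₂]
      _ ≤ ∫ s in r..t, C * (s ^ n / n !) := by
        refine intervalIntegral.integral_mono_on hrt.le (hI₁.sub hI₂)
          (Continuous.intervalIntegrable (by fun_prop) r t) fun s hs => ?_
        have hs0 : 0 ≤ s := hr0.trans hs.1
        exact stefanRhs_sub_le hJ hu₁ hu₂ hs0 (hnonneg s hs)
          (fun y => ih y s ⟨hs0, hs.2.trans htT⟩) (by positivity)
      _ = C * (t ^ (n + 1) / (n + 1)!) - C * (r ^ (n + 1) / (n + 1)!) :=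
        integral_mul_pow_div_factorial C r t n
      _ ≤ C * (t ^ (n + 1) / (n + 1)!) := sub_le_self _ (by positivity)

end Comparison

theorem stefan_nonlocal_BC_comparison_general
    (N : ℕ) (J : Spc N → ℝ) (RJ : ℝ) (hJ : IsKernel J RJ)
    (f₁ f₂ : Spc N → ℝ)
    (u₁ u₂ : Spc N → ℝ → ℝ)
    (hu₁ : IsBCSolution J f₁ u₁) (hu₂ : IsBCSolution J f₂ u₂)
    (hle : ∀ x, f₁ x ≤ f₂ x) :
    ∀ x : Spc N, ∀ t, 0 ≤ t → u₁ x t ≤ u₂ x t := by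
  intro x t ht
  obtain ⟨C₁, hC₁⟩ := hu₁.exists_bound t
  obtain ⟨C₂, hC₂⟩ := hu₂.exists_bound t
  have hC : ∀ y, ∀ s ∈ Icc 0 t, u₁ y s - u₂ y s ≤ C₁ + C₂ := fun y s hs => by
    linarith [(abs_le.1 (hC₁ y s hs)).2, (abs_le.1 (hC₂ y s hs)).1]
  have hC0 : 0 ≤ C₁ + C₂ :=
    add_nonneg ((abs_nonneg _).trans (hC₁ x t ⟨ht, le_rfl⟩))
      ((abs_nonneg _).trans (hC₂ x t ⟨ht, le_rfl⟩))
  have hlim : Tendsto (fun n : ℕ => (C₁ + C₂) * (t ^ n / n !)) atTop (𝓝 0) := by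
    simpa using (FloorSemiring.tendsto_pow_div_factorial_atTop t).const_mul (C₁ + C₂)
  exact sub_nonpos.1 <| ge_of_tendsto' hlim fun n =>
    sub_le_mul_pow_div_factorial hJ hu₁ hu₂ hle hC hC0 n x t ⟨ht, le_rfl⟩

/-- Comparison principle for BC-solutions: if `f₁ ≤ f₂` (both bounded,
continuous, nonnegative), then the corresponding BC-solutions satisfy `u₁ ≤ u₂`. -/
theorem stefan_nonlocal_BC_comparison
    (N : ℕ) (hN : 1 ≤ N) (J : Spc N → ℝ) (RJ : ℝ) (hJ : IsKernel J RJ)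
    (f₁ f₂ : Spc N → ℝ)
    (hfc₁ : Continuous f₁) (hfb₁ : ∃ C, ∀ x, |f₁ x| ≤ C) (hf0₁ : ∀ x, 0 ≤ f₁ x)
    (hfc₂ : Continuous f₂) (hfb₂ : ∃ C, ∀ x, |f₂ x| ≤ C) (hf0₂ : ∀ x, 0 ≤ f₂ x)
    (u₁ u₂ : Spc N → ℝ → ℝ)
    (hu₁ : IsBCSolution J f₁ u₁) (hu₂ : IsBCSolution J f₂ u₂)
    (hle : ∀ x, f₁ x ≤ f₂ x) :
    ∀ x : Spc N, ∀ t, 0 ≤ t → u₁ x t ≤ u₂ x t :=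
  stefan_nonlocal_BC_comparison_general N J RJ hJ f₁ f₂ u₁ u₂ hu₁ hu₂ hle
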